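/- arXiv:2307.11596 — 5 statements merged into one kernel-verified Lean document; each statement's English description precedes it below -/
import Mathlib

section
/- For every natural number n and every permissible pair (t, e) of elements of T_n, the map φ_{t,e} is a semigroup endomorphism of T_n; that is, φ_{t,e}(s ∘ s') = φ_{t,e}(s) ∘ φ_{t,e}(s') for all s, s' ∈ T_n. -/
/-- `s : Fin n → Fin n` is an odd permutation if it is the underlying function of some
permutation of sign `-1`. -/
def IsOddPerm {n : ℕ} (s : Fin n → Fin n) : Prop :=
  ∃ σ : Equiv.Perm (Fin n), Equiv.Perm.sign σ = -1 ∧ ⇑σ = s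

/-- `s : Fin n → Fin n` is an even permutation if it is the underlying function of some
permutation of sign `1`. -/
def IsEvenPerm {n : ℕ} (s : Fin n → Fin n) : Prop :=
  ∃ σ : Equiv.Perm (Fin n), Equiv.Perm.sign σ = 1 ∧ ⇑σ = s

/-- A pair `(t, e)` of elements of `T_n` is permissible if `t ∘ t ∘ t = t` and
`t ∘ e = e ∘ t = e ∘ e = e`. -/
def Permissible {n : ℕ} (t e : Fin n → Fin n) : Prop :=
  t ∘ t ∘ t = t ∧ t ∘ e = e ∧ e ∘ t = e ∧ e ∘ e = e

open Classical in
/-- For a (permissible) pair `(t, e)`, the map `φ_{t,e} : T_n → T_n` sending `s` to `t` if `s`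
is an odd permutation, to `t ∘ t` if `s` is an even permutation, and to `e` if `s` is not
bijective. -/
noncomputable def phi {n : ℕ} (t e : Fin n → Fin n) : (Fin n → Fin n) → (Fin n → Fin n) :=
  fun s => if IsOddPerm s then t else if IsEvenPerm s then t ∘ t else e

/-- `φ : T_n → T_n` is a semigroup endomorphism of `T_n` if `φ (s ∘ s') = φ s ∘ φ s'`
for all `s, s'`. -/
def IsEndo {n : ℕ} (φ : (Fin n → Fin n) → (Fin n → Fin n)) : Prop :=
  ∀ s s' : Fin n → Fin n, φ (s ∘ s') = φ s ∘ φ s'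

/-- For every natural number `n` and every permissible pair `(t, e)` of elements
of `T_n`, the map `φ_{t,e}` is a semigroup endomorphism of `T_n`. -/
theorem phi_isEndo (n : ℕ) (t e : Fin n → Fin n) (h : Permissible t e) :
    ∀ s s' : Fin n → Fin n, phi t e (s ∘ s') = phi t e s ∘ phi t e s' := by
  obtain ⟨h1, h2, h3, h4⟩ := h
  have key : ∀ s : Fin n → Fin n, IsOddPerm s → IsEvenPerm s → False := by
    rintro s ⟨σ, hσ, rfl⟩ ⟨τ, hτ, hτ'⟩
    obtain rfl : τ = σ := Equiv.coe_fn_injective hτ'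
    rw [hσ] at hτ; exact absurd hτ (by decide)
  have oddB : ∀ s : Fin n → Fin n, IsOddPerm s → Function.Bijective s := by
    rintro s ⟨σ, _, rfl⟩; exact σ.bijective
  have evenB : ∀ s : Fin n → Fin n, IsEvenPerm s → Function.Bijective s := by
    rintro s ⟨σ, _, rfl⟩; exact σ.bijective
  have phi_odd : ∀ s : Fin n → Fin n, IsOddPerm s → phi t e s = t := by
    intro s hs; simp [phi, hs]
  have phi_even : ∀ s : Fin n → Fin n, IsEvenPerm s → phi t e s = t ∘ t := by
    intro s hs
    simp only [phi, if_neg (fun h' => key s h' hs), if_pos hs]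
  have phi_nb : ∀ s : Fin n → Fin n, ¬Function.Bijective s → phi t e s = e := by
    intro s hs
    simp only [phi, if_neg (fun h' => hs (oddB s h')), if_neg (fun h' => hs (evenB s h'))]
  have oo : ∀ s s' : Fin n → Fin n, IsOddPerm s → IsOddPerm s' → IsEvenPerm (s ∘ s') := by
    rintro s s' ⟨σ, hσ, rfl⟩ ⟨τ, hτ, rfl⟩
    exact ⟨σ * τ, by simp [hσ, hτ], rfl⟩
  have oe : ∀ s s' : Fin n → Fin n, IsOddPerm s → IsEvenPerm s' → IsOddPerm (s ∘ s') := by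
    rintro s s' ⟨σ, hσ, rfl⟩ ⟨τ, hτ, rfl⟩
    exact ⟨σ * τ, by simp [hσ, hτ], rfl⟩
  have eo : ∀ s s' : Fin n → Fin n, IsEvenPerm s → IsOddPerm s' → IsOddPerm (s ∘ s') := by
    rintro s s' ⟨σ, hσ, rfl⟩ ⟨τ, hτ, rfl⟩
    exact ⟨σ * τ, by simp [hσ, hτ], rfl⟩
  have ee : ∀ s s' : Fin n → Fin n, IsEvenPerm s → IsEvenPerm s' → IsEvenPerm (s ∘ s') := by
    rintro s s' ⟨σ, hσ, rfl⟩ ⟨τ, hτ, rfl⟩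
    exact ⟨σ * τ, by simp [hσ, hτ], rfl⟩
  have nbl : ∀ s s' : Fin n → Fin n, ¬Function.Bijective s →
      ¬Function.Bijective (s ∘ s') := by
    intro s s' hs hc
    exact hs ((Finite.surjective_iff_bijective).1 (Function.Surjective.of_comp hc.2))
  have nbr : ∀ s s' : Fin n → Fin n, ¬Function.Bijective s' →
      ¬Function.Bijective (s ∘ s') := by
    intro s s' hs hc
    exact hs ((Finite.injective_iff_bijective).1 (Function.Injective.of_comp hc.1))
  have tri : ∀ s : Fin n → Fin n,
      IsOddPerm s ∨ IsEvenPerm s ∨ ¬Function.Bijective s := by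
    intro s
    by_cases hb : Function.Bijective s
    · rcases Int.units_eq_one_or (Equiv.Perm.sign (Equiv.ofBijective s hb)) with hs | hs
      · exact Or.inr (Or.inl ⟨Equiv.ofBijective s hb, hs, rfl⟩)
      · exact Or.inl ⟨Equiv.ofBijective s hb, hs, rfl⟩
    · exact Or.inr (Or.inr hb)
  intro s s'
  rcases tri s with hs | hs | hs <;> rcases tri s' with hs' | hs' | hs'
  · rw [phi_even _ (oo s s' hs hs'), phi_odd s hs, phi_odd s' hs']
  · rw [phi_odd _ (oe s s' hs hs'), phi_odd s hs, phi_even s' hs', h1]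
  · rw [phi_nb _ (nbr s s' hs'), phi_odd s hs, phi_nb s' hs', h2]
  · rw [phi_odd _ (eo s s' hs hs'), phi_even s hs, phi_odd s' hs',
      Function.comp_assoc, h1]
  · rw [phi_even _ (ee s s' hs hs'), phi_even s hs, phi_even s' hs']
    conv_rhs => rw [Function.comp_assoc, h1]
  · rw [phi_nb _ (nbr s s' hs'), phi_even s hs, phi_nb s' hs',
      Function.comp_assoc, h2, h2]
  · rw [phi_nb _ (nbl s s' hs), phi_nb s hs, phi_odd s' hs', h3]
  · rw [phi_nb _ (nbl s s' hs), phi_nb s hs, phi_even s' hs',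
      ← Function.comp_assoc, h3, h3]
  · rw [phi_nb _ (nbl s s' hs), phi_nb s hs, phi_nb s' hs', h4]
end

section
/- Let n be a natural number with n ≥ 1 and n ≠ 4, and let φ : T_n → T_n satisfy φ(s ∘ s') = φ(s) ∘ φ(s') for all s, s' ∈ T_n. Then either there exists a permutation g : Equiv.Perm (Fin n) with φ = ψ_g, or there exists a permissible pair (t, e) of elements of T_n with φ = φ_{t,e}. -/
/-! The permutations `σ` with `φ σ = φ id` form a normal subgroup `K` of `Sₙ`.

If `K` is trivial, `φ` is injective on `Sₙ`, so `Sₙ` embeds into the symmetric group of the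
range of the idempotent `φ id`; hence `φ id = id` and `φ` permutes `Sₙ`. The image of a constant
map then absorbs every permutation, so it is again constant, and these constants define the
conjugating permutation.

If `K` is nontrivial, it contains `Aₙ` because `n ≠ 4`, so on `Sₙ` the map `φ` only sees the sign.
All defect-one idempotents `update id a b` then have the same image `e`, and since every
non-bijective map is a product of such idempotents and one permutation, `φ` is `e` on all of
them. -/

open Equiv Equiv.Perm Function

namespace Function

variable {α : Type*} [DecidableEq α]

theorem update_id_comp_self (a b : α) : update id a b ∘ update id a b = update id a b := by
  ext x; simp only [comp_apply, update_apply, id]; grind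

theorem update_id_comp_update_id_swap (a b : α) :
    update id a b ∘ update id b a = update id a b := by
  ext x; simp only [comp_apply, update_apply, id]; grind

theorem update_id_comm (a b c : α) :
    update id a b ∘ update id c b = update id c b ∘ update id a b := by
  ext x; simp only [comp_apply, update_apply, id]; grind

theorem swap_comp_update_id (a b : α) : Equiv.swap a b ∘ update id a b = update id b a := by
  ext x; simp only [comp_apply, update_apply, id, swap_apply_def]; grind

theorem update_id_comp_swap (a b : α) : update id a b ∘ Equiv.swap a b = update id a b := by
  ext x; simp only [comp_apply, update_apply, id, swap_apply_def]; grind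

theorem perm_comp_update_id_comp_inv (σ : Perm α) (a b : α) :
    σ ∘ update id a b ∘ ⇑σ⁻¹ = update id (σ a) (σ b) := by
  ext x
  simp only [comp_apply, update_apply, id, Perm.inv_eq_iff_eq]
  split_ifs <;> simp

theorem update_id_comp_update_of_notMem_range {s : α → α} {w : α} (hw : w ∉ Set.range s)
    (a : α) : update id w (s a) ∘ update s a w = s := by
  ext x; simp only [comp_apply, update_apply, id]; grind

theorem image_update_of_apply_eq [Fintype α] {s : α → α} {a b : α} (hab : a ≠ b) (hs : s a = s b)
    (w : α) : Finset.univ.image (update s a w) = insert w (Finset.univ.image s) := by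
  ext y; simp only [Finset.mem_image, Finset.mem_univ, true_and, Finset.mem_insert, update_apply]
  grind

theorem induction_on_not_bijective [Fintype α] {P : (α → α) → Prop}
    (perm : ∀ (a b : α) (σ : Perm α), a ≠ b → P (update id a b ∘ σ))
    (comp : ∀ (a b : α) (s : α → α), a ≠ b → P s → P (update id a b ∘ s))
    (s : α → α) (hs : ¬ Bijective s) : P s := by
  obtain ⟨a, b, hsab, hab⟩ : ∃ a b, s a = s b ∧ a ≠ b := by
    simpa [Injective] using fun h : Injective s => hs h.bijective_of_finite
  obtain ⟨w, hw⟩ : ∃ w, w ∉ Set.range s := by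
    simpa [Surjective] using fun h : Surjective s => hs h.bijective_of_finite
  have hws : w ≠ s a := fun h => hw ⟨a, h.symm⟩
  -- `update s a w` still hits `s a` (at `b`) and also hits `w`, so it has a larger range.
  rw [← update_id_comp_update_of_notMem_range hw a]
  by_cases hs' : Bijective (update s a w)
  · exact perm w (s a) (Equiv.ofBijective _ hs') hws
  · exact comp w (s a) _ hws (induction_on_not_bijective perm comp _ hs')
termination_by Fintype.card α - (Finset.univ.image s).card
decreasing_by
  rw [image_update_of_apply_eq hab hsab, Finset.card_insert_of_notMem (by simpa using hw)]
  have := Finset.card_le_univ (insert w (Finset.univ.image s))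
  rw [Finset.card_insert_of_notMem (by simpa using hw)] at this
  omega

end Function

theorem Subgroup.Normal.mem_of_isConj {G : Type*} [Group G] {N : Subgroup G} (hN : N.Normal)
    {g h : G} (hg : g ∈ N) (hgh : IsConj g h) : h ∈ N := by
  obtain ⟨c, rfl⟩ := isConj_iff.mp hgh
  exact hN.conj_mem g hg c

namespace Equiv.Perm

theorem alternatingGroup_le_of_isThreeCycle_mem {α : Type*} [Fintype α] [DecidableEq α]
    {N : Subgroup (Perm α)} (hN : N.Normal) {g : Perm α} (hg : IsThreeCycle g) (hgN : g ∈ N) :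
    alternatingGroup α ≤ N := by
  rw [← closure_three_cycles_eq_alternating, Subgroup.closure_le]
  intro h hh
  exact hN.mem_of_isConj hgN (isConj_iff_cycleType_eq.mpr (hg.cycleType.trans hh.cycleType.symm))

theorem alternatingGroup_le_of_normal_of_card_ne_four {α : Type*} [Fintype α] [DecidableEq α]
    (hα : Nat.card α ≠ 4) {N : Subgroup (Perm α)} [N.Normal] (hN : N ≠ ⊥) :
    alternatingGroup α ≤ N := by
  obtain ⟨ρ, hρN, hρ⟩ := N.bot_or_exists_ne_one.resolve_left hN
  have h2 : 2 ≤ ρ.support.card := two_le_card_support_of_ne_one hρ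
  have hle : ρ.support.card ≤ Nat.card α := by
    rw [Nat.card_eq_fintype_card]; exact Finset.card_le_univ _
  rcases (show Nat.card α ≤ 2 ∨ Nat.card α = 3 ∨ 5 ≤ Nat.card α by omega) with h | h | h
  · simp [alternatingGroup.eq_bot_of_card_le_two h]
  · rcases (show ρ.support.card = 2 ∨ ρ.support.card = 3 by omega) with hs | hs
    · obtain ⟨a, b, hab, hρab⟩ := card_support_eq_two.mp hs
      suffices N = ⊤ by simp [this]
      rw [eq_top_iff, ← closure_isSwap, Subgroup.closure_le]
      rintro _ ⟨x, y, hxy, rfl⟩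
      exact ‹N.Normal›.mem_of_isConj (hρab ▸ hρN) (isConj_swap hab hxy)
    · exact alternatingGroup_le_of_isThreeCycle_mem ‹_› (card_support_eq_three_iff.mp hs) hρN
  · exact alternatingGroup_le_of_normal h ((Subgroup.nontrivial_iff_ne_bot N).mpr hN)

theorem exists_apply_eq_and_apply_eq {α : Type*} [DecidableEq α] {a b c d : α} (hab : a ≠ b)
    (hcd : c ≠ d) : ∃ σ : Perm α, σ a = c ∧ σ b = d := by
  refine ⟨swap (swap a c b) d * swap a c, ?_, ?_⟩
  · have : swap a c b ≠ c := by
      rw [Ne, swap_apply_eq_iff, swap_apply_right]; exact hab.symm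
    simp [swap_apply_of_ne_of_ne this.symm hcd]
  · simp

theorem eq_swap_of_ne_one {α : Type*} [DecidableEq α] {a b : α} (hab : a ≠ b)
    (h : ∀ c, c = a ∨ c = b) {ρ : Perm α} (hρ : ρ ≠ 1) : ρ = swap a b := by
  have hρa : ρ a = b := (h _).resolve_left fun h' => hρ <| by
    have hρb : ρ b = b := (h _).resolve_left fun h'' => hab (ρ.injective (h''.trans h'.symm)).symm
    ext x
    rcases h x with rfl | rfl <;> simp [*]
  have hρb : ρ b = a := (h _).resolve_right fun h' => hab (ρ.injective (hρa.trans h'.symm))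
  ext x
  rcases h x with rfl | rfl <;> simp [*]

end Equiv.Perm

theorem isOddPerm_coe_iff {n : ℕ} (σ : Perm (Fin n)) : IsOddPerm ⇑σ ↔ sign σ = -1 :=
  ⟨fun ⟨_, h, hτ⟩ => DFunLike.coe_injective hτ ▸ h, fun h => ⟨σ, h, rfl⟩⟩

theorem isEvenPerm_coe_iff {n : ℕ} (σ : Perm (Fin n)) : IsEvenPerm ⇑σ ↔ sign σ = 1 :=
  ⟨fun ⟨_, h, hτ⟩ => DFunLike.coe_injective hτ ▸ h, fun h => ⟨σ, h, rfl⟩⟩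

theorem phi_of_sign_eq_neg_one {n : ℕ} (t e : Fin n → Fin n) {σ : Perm (Fin n)}
    (h : sign σ = -1) : phi t e σ = t := by
  simp [phi, isOddPerm_coe_iff, h]

theorem phi_of_sign_eq_one {n : ℕ} (t e : Fin n → Fin n) {σ : Perm (Fin n)}
    (h : sign σ = 1) : phi t e σ = t ∘ t := by
  simp [phi, isOddPerm_coe_iff, isEvenPerm_coe_iff, h]

theorem phi_of_not_bijective {n : ℕ} (t e : Fin n → Fin n) {s : Fin n → Fin n}
    (hs : ¬ Bijective s) : phi t e s = e := by
  have hodd : ¬ IsOddPerm s := fun ⟨σ, _, hσ⟩ => hs (hσ ▸ σ.bijective)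
  have heven : ¬ IsEvenPerm s := fun ⟨σ, _, hσ⟩ => hs (hσ ▸ σ.bijective)
  simp [phi, hodd, heven]

namespace IsEndo

variable {n : ℕ} {φ : (Fin n → Fin n) → (Fin n → Fin n)}

theorem id_comp (hφ : IsEndo φ) (s : Fin n → Fin n) : φ id ∘ φ s = φ s := by
  rw [← hφ]; rfl

theorem comp_id (hφ : IsEndo φ) (s : Fin n → Fin n) : φ s ∘ φ id = φ s := by
  rw [← hφ]; rfl

theorem inv_comp (hφ : IsEndo φ) (σ : Perm (Fin n)) : φ ⇑σ⁻¹ ∘ φ σ = φ id := by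
  rw [← hφ, ← coe_mul, inv_mul_cancel, coe_one]

theorem comp_inv (hφ : IsEndo φ) (σ : Perm (Fin n)) : φ σ ∘ φ ⇑σ⁻¹ = φ id := by
  rw [← hφ, ← coe_mul, mul_inv_cancel, coe_one]

theorem map_conj (hφ : IsEndo φ) (σ : Perm (Fin n)) (s : Fin n → Fin n) :
    φ (σ ∘ s ∘ ⇑σ⁻¹) = φ σ ∘ φ s ∘ φ ⇑σ⁻¹ := by
  rw [hφ, hφ]

def permKer (hφ : IsEndo φ) : Subgroup (Perm (Fin n)) where
  carrier := {σ | φ σ = φ id}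
  one_mem' := rfl
  mul_mem' {σ τ} (hσ : φ σ = φ id) (hτ : φ τ = φ id) := by
    change φ (σ ∘ τ) = φ id
    rw [hφ, hσ, hτ, hφ.id_comp]
  inv_mem' {σ} (hσ : φ σ = φ id) := by
    calc φ ⇑σ⁻¹ = φ ⇑σ⁻¹ ∘ φ σ := by rw [hσ, hφ.comp_id]
      _ = φ id := hφ.inv_comp σ

theorem mem_permKer (hφ : IsEndo φ) {σ : Perm (Fin n)} : σ ∈ hφ.permKer ↔ φ σ = φ id :=
  Iff.rfl

instance (hφ : IsEndo φ) : hφ.permKer.Normal where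
  conj_mem τ (hτ : φ τ = φ id) σ := by
    change φ ((σ ∘ τ) ∘ ⇑σ⁻¹) = φ id
    rw [comp_assoc, hφ.map_conj, hτ, hφ.id_comp, hφ.comp_inv]

theorem injective_of_permKer_eq_bot (hφ : IsEndo φ) (hK : hφ.permKer = ⊥) :
    Injective fun σ : Perm (Fin n) => φ σ := by
  intro σ τ (h : φ σ = φ τ)
  have : σ * τ⁻¹ ∈ hφ.permKer := by
    rw [mem_permKer, coe_mul, hφ, h, hφ.comp_inv]
  rwa [hK, Subgroup.mem_bot, mul_inv_eq_one] at this

def restrictRange (hφ : IsEndo φ) (σ : Perm (Fin n)) : Perm (Set.range (φ id)) where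
  toFun x := ⟨φ σ x, φ σ x, congrFun (hφ.id_comp σ) x⟩
  invFun x := ⟨φ ⇑σ⁻¹ x, φ ⇑σ⁻¹ x, congrFun (hφ.id_comp _) x⟩
  left_inv := by
    rintro ⟨_, x, rfl⟩
    exact Subtype.ext (show (φ ⇑σ⁻¹ ∘ φ σ ∘ φ id) x = φ id x by
      rw [← comp_assoc, hφ.inv_comp, hφ.id_comp])
  right_inv := by
    rintro ⟨_, x, rfl⟩
    exact Subtype.ext (show (φ σ ∘ φ ⇑σ⁻¹ ∘ φ id) x = φ id x by
      rw [← comp_assoc, hφ.comp_inv, hφ.id_comp])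

theorem map_id_eq_id_of_permKer_eq_bot (hφ : IsEndo φ) (hn : 1 ≤ n) (hK : hφ.permKer = ⊥) :
    φ id = id := by
  have hinj : Injective hφ.restrictRange := by
    intro σ τ h
    apply hφ.injective_of_permKer_eq_bot hK
    funext x
    show φ σ x = φ τ x
    rw [← hφ.comp_id σ, ← hφ.comp_id τ]
    exact congrArg Subtype.val (Equiv.congr_fun h ⟨φ id x, x, rfl⟩)
  -- `n! ≤ |range (φ id)|!`, so `φ id` is surjective.
  have hcard := Fintype.card_le_of_injective _ hinj
  rw [Fintype.card_perm, Fintype.card_perm, Fintype.card_fin] at hcard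
  have hsurj : Surjective (φ id) := by
    by_contra h
    have hlt := Fintype.card_lt_of_injective_not_surjective ((↑) : Set.range (φ id) → Fin n)
      Subtype.val_injective fun hv => h fun y => by obtain ⟨⟨_, x, hx⟩, rfl⟩ := hv y; exact ⟨x, hx⟩
    have hpos : 0 < Fintype.card (Set.range (φ id)) :=
      Fintype.card_pos_iff.mpr ⟨⟨_, ⟨0, hn⟩, rfl⟩⟩
    rw [Fintype.card_fin] at hlt
    exact absurd hcard (not_le.mpr ((Nat.factorial_lt hpos).mpr hlt))
  funext y
  obtain ⟨x, rfl⟩ := hsurj y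
  exact congrFun (hφ.id_comp id) x

theorem exists_map_eq_of_permKer_eq_bot (hφ : IsEndo φ) (hn : 1 ≤ n) (hK : hφ.permKer = ⊥)
    (π : Perm (Fin n)) : ∃ σ : Perm (Fin n), φ σ = π := by
  have hid := hφ.map_id_eq_id_of_permKer_eq_bot hn hK
  let Φ : Perm (Fin n) → Perm (Fin n) := fun σ =>
    { toFun := φ σ
      invFun := φ ⇑σ⁻¹
      left_inv := congrFun ((hφ.inv_comp σ).trans hid)
      right_inv := congrFun ((hφ.comp_inv σ).trans hid) }
  have hΦ : Injective Φ := fun σ τ h =>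
    hφ.injective_of_permKer_eq_bot hK (congrArg DFunLike.coe h)
  obtain ⟨σ, hσ⟩ := Finite.surjective_of_injective hΦ π
  exact ⟨σ, congrArg DFunLike.coe hσ⟩

theorem exists_eq_conj_of_surjective (hφ : IsEndo φ)
    (hsurj : ∀ π : Perm (Fin n), ∃ σ : Perm (Fin n), φ σ = π) :
    ∃ g : Perm (Fin n), φ = fun s => ⇑g ∘ s ∘ ⇑g⁻¹ := by
  -- `const j ∘ σ = const j`, and the `φ σ` run through all permutations.
  have hconst : ∀ j x y : Fin n, φ (const _ j) x = φ (const _ j) y := by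
    intro j x y
    obtain ⟨σ, hσ⟩ := hsurj (swap x y)
    have : φ (const _ j) ∘ φ σ = φ (const _ j) := (hφ _ _).symm
    simpa [hσ] using congrFun this y
  set c : Fin n → Fin n := fun j => φ (const _ j) j
  have hc : ∀ s j, φ s (c j) = c (s j) := fun s j =>
    calc φ s (c j) = φ s (φ (const _ j) (s j)) := congrArg (φ s) (hconst j j (s j))
      _ = c (s j) := congrFun (hφ s (const _ j)).symm (s j)
  have hcsurj : Surjective c := by
    intro y
    obtain ⟨σ, hσ⟩ := hsurj (swap (c y) y)
    exact ⟨σ y, by rw [← hc, hσ, swap_apply_left]⟩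
  let g : Perm (Fin n) := ofBijective c ⟨Finite.injective_iff_surjective.mpr hcsurj, hcsurj⟩
  refine ⟨g, funext fun s => funext fun x => ?_⟩
  obtain ⟨j, rfl⟩ := g.surjective x
  change φ s (c j) = g (s (g.symm (g j)))
  rw [g.symm_apply_apply]
  exact hc s j

theorem map_conj_of_mem_permKer (hφ : IsEndo φ) {σ : Perm (Fin n)} (hσ : σ ∈ hφ.permKer)
    (s : Fin n → Fin n) : φ (σ ∘ s ∘ ⇑σ⁻¹) = φ s := by
  rw [hφ.map_conj, hσ, inv_mem hσ, hφ.comp_id, hφ.id_comp]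

theorem map_eq_of_sign_eq (hφ : IsEndo φ) (hA : alternatingGroup (Fin n) ≤ hφ.permKer)
    {σ τ : Perm (Fin n)} (h : sign σ = sign τ) : φ σ = φ τ := by
  have hτσ : φ ⇑τ⁻¹ ∘ φ σ = φ id := by
    rw [← hφ, ← coe_mul]
    exact hA (by rw [mem_alternatingGroup, map_mul, map_inv, h, inv_mul_cancel])
  calc φ σ = φ τ ∘ φ ⇑τ⁻¹ ∘ φ σ := by rw [← comp_assoc, hφ.comp_inv, hφ.id_comp]
    _ = φ τ := by rw [hτσ, hφ.comp_id]

theorem map_update_id_symm_of_ne (hφ : IsEndo φ) (hA : alternatingGroup (Fin n) ≤ hφ.permKer)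
    {a b c : Fin n} (hab : a ≠ b) (hca : c ≠ a) (hcb : c ≠ b) :
    φ (update id a b) = φ (update id b a) := by
  -- The even permutation `(a b)(b c)` conjugates `update id b a` to `update id c b`, which
  -- commutes with `update id a b`.
  have hcycle : φ (update id c b) = φ (update id b a) := by
    have hσ : swap a b * swap b c ∈ hφ.permKer := hA <| by
      rw [mem_alternatingGroup, map_mul, sign_swap hab, sign_swap hcb.symm]; rfl
    have := hφ.map_conj_of_mem_permKer hσ (update id b a)
    rwa [perm_comp_update_id_comp_inv, mul_apply, mul_apply, swap_apply_left,
      swap_apply_of_ne_of_ne hca hcb, swap_apply_of_ne_of_ne hab hca.symm, swap_apply_left] at this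
  calc φ (update id a b) = φ (update id a b) ∘ φ (update id c b) := by
        rw [hcycle, ← hφ, update_id_comp_update_id_swap]
    _ = φ (update id c b) ∘ φ (update id a b) := by rw [← hφ, ← hφ, update_id_comm]
    _ = φ (update id b a) := by rw [hcycle, ← hφ, update_id_comp_update_id_swap]

theorem map_update_id_symm_of_permKer_ne_bot (hφ : IsEndo φ)
    (hA : alternatingGroup (Fin n) ≤ hφ.permKer) (hK : hφ.permKer ≠ ⊥) {a b : Fin n}
    (hab : a ≠ b) : φ (update id a b) = φ (update id b a) := by
  by_cases hc : ∃ c, c ≠ a ∧ c ≠ b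
  · obtain ⟨c, hca, hcb⟩ := hc
    exact hφ.map_update_id_symm_of_ne hA hab hca hcb
  · push Not at hc
    obtain ⟨ρ, hρK, hρ⟩ := hφ.permKer.bot_or_exists_ne_one.resolve_left hK
    rw [eq_swap_of_ne_one hab (fun c => or_iff_not_imp_left.mpr (hc c)) hρ, mem_permKer] at hρK
    rw [← swap_comp_update_id a b, hφ, hρK, hφ.id_comp]

theorem map_update_id_comp_perm (hφ : IsEndo φ) (hA : alternatingGroup (Fin n) ≤ hφ.permKer)
    {a b : Fin n} (hab : a ≠ b) (σ : Perm (Fin n)) :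
    φ (update id a b) ∘ φ σ = φ (update id a b) := by
  rcases Int.units_eq_one_or (sign σ) with h | h
  · rw [hA (mem_alternatingGroup.mpr h), hφ.comp_id]
  · rw [hφ.map_eq_of_sign_eq hA (h.trans (sign_swap hab).symm), ← hφ, update_id_comp_swap]

theorem map_update_id_conj (hφ : IsEndo φ)
    (hA : alternatingGroup (Fin n) ≤ hφ.permKer) {a b : Fin n} (hab : a ≠ b)
    (hsymm : φ (update id a b) = φ (update id b a)) (σ : Perm (Fin n)) :
    φ (update id (σ a) (σ b)) = φ (update id a b) := by
  rw [← perm_comp_update_id_comp_inv, hφ.map_conj, hφ.map_update_id_comp_perm hA hab]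
  rcases Int.units_eq_one_or (sign σ) with h | h
  · rw [hA (mem_alternatingGroup.mpr h), hφ.id_comp]
  · rw [hφ.map_eq_of_sign_eq hA (h.trans (sign_swap hab).symm), ← hφ, swap_comp_update_id, hsymm]

theorem map_update_id_eq (hφ : IsEndo φ) (hA : alternatingGroup (Fin n) ≤ hφ.permKer)
    (hsymm : ∀ a b : Fin n, a ≠ b → φ (update id a b) = φ (update id b a))
    {a b c d : Fin n} (hab : a ≠ b) (hcd : c ≠ d) :
    φ (update id c d) = φ (update id a b) := by
  obtain ⟨σ, rfl, rfl⟩ := exists_apply_eq_and_apply_eq hab hcd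
  exact hφ.map_update_id_conj hA hab (hsymm a b hab) σ

theorem map_eq_of_not_bijective (hφ : IsEndo φ) (hA : alternatingGroup (Fin n) ≤ hφ.permKer)
    (hsymm : ∀ a b : Fin n, a ≠ b → φ (update id a b) = φ (update id b a))
    {a b : Fin n} (hab : a ≠ b) {s : Fin n → Fin n} (hs : ¬ Bijective s) :
    φ s = φ (update id a b) := by
  refine induction_on_not_bijective (P := fun s => φ s = φ (update id a b)) ?_ ?_ s hs
  · intro c d σ hcd
    rw [hφ, hφ.map_update_id_comp_perm hA hcd, hφ.map_update_id_eq hA hsymm hab hcd]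
  · intro c d s hcd ih
    rw [hφ, ih, hφ.map_update_id_eq hA hsymm hab hcd, ← hφ, update_id_comp_self]

theorem exists_permissible (hφ : IsEndo φ) (hA : alternatingGroup (Fin n) ≤ hφ.permKer)
    (hsymm : ∀ a b : Fin n, a ≠ b → φ (update id a b) = φ (update id b a))
    {a b : Fin n} (hab : a ≠ b) : ∃ t e : Fin n → Fin n, Permissible t e ∧ φ = phi t e := by
  have htt : φ (swap a b) ∘ φ (swap a b) = φ id := by
    rw [← hφ, ← coe_mul, swap_mul_self, coe_one]
  refine ⟨φ (swap a b), φ (update id a b), ⟨?_, ?_, ?_, ?_⟩, funext fun s => ?_⟩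
  · rw [htt, hφ.comp_id]
  · rw [← hφ, swap_comp_update_id, hsymm a b hab]
  · rw [← hφ, update_id_comp_swap]
  · rw [← hφ, update_id_comp_self]
  by_cases hs : Bijective s
  · obtain ⟨σ, rfl⟩ : ∃ σ : Perm (Fin n), ⇑σ = s := ⟨ofBijective s hs, rfl⟩
    rcases Int.units_eq_one_or (sign σ) with h | h
    · rw [phi_of_sign_eq_one _ _ h, htt]
      exact hA (mem_alternatingGroup.mpr h)
    · rw [phi_of_sign_eq_neg_one _ _ h]
      exact hφ.map_eq_of_sign_eq hA (h.trans (sign_swap hab).symm)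
  · rw [phi_of_not_bijective _ _ hs]
    exact hφ.map_eq_of_not_bijective hA hsymm hab hs

end IsEndo

/-- For `n ≥ 1`, `n ≠ 4`, every semigroup endomorphism of `T_n` is either a
conjugation `ψ_g` by a permutation `g`, or a map `φ_{t,e}` for a permissible pair `(t, e)`. -/
theorem endo_classification (n : ℕ) (hn : 1 ≤ n) (hn4 : n ≠ 4)
    (φ : (Fin n → Fin n) → (Fin n → Fin n)) (hφ : IsEndo φ) :
    (∃ g : Equiv.Perm (Fin n), φ = fun s => ⇑g ∘ s ∘ ⇑g⁻¹) ∨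
      (∃ t e : Fin n → Fin n, Permissible t e ∧ φ = phi t e) := by
  by_cases hK : hφ.permKer = ⊥
  · exact Or.inl (hφ.exists_eq_conj_of_surjective (hφ.exists_map_eq_of_permKer_eq_bot hn hK))
  have hA : alternatingGroup (Fin n) ≤ hφ.permKer :=
    alternatingGroup_le_of_normal_of_card_ne_four (by simpa using hn4) hK
  have : Nontrivial (Fin n) := by
    by_contra h
    rw [not_nontrivial_iff_subsingleton] at h
    exact hK (Subgroup.eq_bot_of_subsingleton _)
  obtain ⟨a, b, hab⟩ := exists_pair_ne (Fin n)
  exact Or.inr (hφ.exists_permissible hA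
    (fun _ _ => hφ.map_update_id_symm_of_permKer_ne_bot hA hK) hab)
end

section
/- Let n be a natural number and let (t, e) and (u, f) be permissible pairs of elements of T_n. If the sets {t, t ∘ t, e} and {u, u ∘ u, f} (as subsets of T_n) are equal, then t = u and e = f. In particular, φ_{t,e} = φ_{u,f} if and only if t = u and e = f. -/
lemma key_set {n : ℕ} {t e u f : Fin n → Fin n} (hte : Permissible t e) (huf : Permissible u f)
    (hS : ({t, t ∘ t, e} : Set (Fin n → Fin n)) = {u, u ∘ u, f}) : t = u ∧ e = f := by
  obtain ⟨ht3, hte1, het, hee⟩ := hte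
  obtain ⟨hu3, huf1, hfu, hff⟩ := huf
  have het' : ∀ x, e (t x) = e x := fun x => congrFun het x
  have hte' : ∀ x, t (e x) = e x := fun x => congrFun hte1 x
  have huf' : ∀ x, u (f x) = f x := fun x => congrFun huf1 x
  have hfu' : ∀ x, f (u x) = f x := fun x => congrFun hfu x
  have eabs : ∀ x ∈ ({t, t ∘ t, e} : Set (Fin n → Fin n)), e ∘ x = e := by
    rintro x (rfl | rfl | rfl)
    · exact het
    · funext y; show e (t (t y)) = e y; rw [het', het']
    · exact hee
  have frabs : ∀ x ∈ ({u, u ∘ u, f} : Set (Fin n → Fin n)), x ∘ f = f := by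
    rintro x (rfl | rfl | rfl)
    · exact huf1
    · funext y; show u (u (f y)) = f y; rw [huf', huf']
    · exact hff
  have hf_mem : f ∈ ({t, t ∘ t, e} : Set (Fin n → Fin n)) := by rw [hS]; simp
  have he_mem : e ∈ ({u, u ∘ u, f} : Set (Fin n → Fin n)) := by rw [← hS]; simp
  have ht_mem : t ∈ ({u, u ∘ u, f} : Set (Fin n → Fin n)) := by rw [← hS]; simp
  have hu_mem : u ∈ ({t, t ∘ t, e} : Set (Fin n → Fin n)) := by rw [hS]; simp
  have hef : e = f := by
    have h1 : e ∘ f = e := eabs f hf_mem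
    have h2 : e ∘ f = f := frabs e he_mem
    rw [← h1, h2]
  refine ⟨?_, hef⟩
  have ht3' : ∀ x, t (t (t x)) = t x := fun x => congrFun ht3 x
  simp only [Set.mem_insert_iff, Set.mem_singleton_iff] at ht_mem hu_mem
  rcases ht_mem with h | h | h
  · exact h
  · rcases hu_mem with h' | h' | h'
    · exact h'.symm
    · have htt : t = t ∘ t := by
        funext x
        have := congrFun h x
        simp only [h', Function.comp_apply] at this
        rw [this, ht3']; rfl
      rw [h', ← htt]
    · have : t = e := by rw [h, h']; exact hee
      rw [this, h']
  · have hte2 : t = e := h.trans hef.symm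
    rcases hu_mem with h' | h' | h'
    · exact h'.symm
    · rw [h', hte2, hee, ← hte2]
    · rw [h', ← hte2]

lemma phi_eq_aux {n : ℕ} {t e u f : Fin n → Fin n} (h : phi t e = phi u f) : t = u ∧ e = f := by
  rcases Nat.lt_or_ge n 2 with hn | hn
  · haveI : Subsingleton (Fin n) := by
      interval_cases n <;> infer_instance
    exact ⟨Subsingleton.elim _ _, Subsingleton.elim _ _⟩
  · have h01 : (⟨0, by omega⟩ : Fin n) ≠ ⟨1, by omega⟩ := by
      intro hh; simpa using congrArg Fin.val hh
    set σ : Equiv.Perm (Fin n) := Equiv.swap ⟨0, by omega⟩ ⟨1, by omega⟩ with hσ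
    have hodd : IsOddPerm (⇑σ) := ⟨σ, Equiv.Perm.sign_swap h01, rfl⟩
    have h1 : t = u := by
      have := congrFun h (⇑σ)
      simpa [phi, if_pos hodd] using this
    refine ⟨h1, ?_⟩
    set c : Fin n → Fin n := fun _ => ⟨0, by omega⟩ with hc
    have hni : ¬ Function.Injective c := by
      intro hinj
      exact h01 (hinj (by simp [hc]))
    have hnodd : ¬ IsOddPerm c := by
      rintro ⟨τ, -, hτ⟩; exact hni (hτ ▸ τ.injective)
    have hneven : ¬ IsEvenPerm c := by
      rintro ⟨τ, -, hτ⟩; exact hni (hτ ▸ τ.injective)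
    have := congrFun h c
    simpa [phi, if_neg hnodd, if_neg hneven] using this

/-- For permissible pairs `(t, e)` and `(u, f)`, if `{t, t∘t, e} = {u, u∘u, f}`
as subsets of `T_n` then `t = u` and `e = f`; in particular `φ_{t,e} = φ_{u,f}` iff
`t = u` and `e = f`. -/
theorem phi_injective_on_permissible (n : ℕ) (t e u f : Fin n → Fin n)
    (hte : Permissible t e) (huf : Permissible u f) :
    (({t, t ∘ t, e} : Set (Fin n → Fin n)) = {u, u ∘ u, f} → t = u ∧ e = f) ∧
      (phi t e = phi u f ↔ (t = u ∧ e = f)) := by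
  refine ⟨fun hS => key_set hte huf hS, ⟨phi_eq_aux, ?_⟩⟩
  rintro ⟨rfl, rfl⟩
  rfl
end

section
/- Let n be a natural number, (t, e) a permissible pair of elements of T_n, and g : Equiv.Perm (Fin n) a permutation. Then: (i) for every s ∈ T_n, φ_{t,e}(g ∘ s ∘ g⁻¹) = φ_{t,e}(s); and (ii) the pair (g ∘ t ∘ g⁻¹, g ∘ e ∘ g⁻¹) is permissible and for every s ∈ T_n one has g ∘ φ_{t,e}(s) ∘ g⁻¹ = φ_{g∘t∘g⁻¹, g∘e∘g⁻¹}(s). -/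
/-!
Conjugation `g.conj` by a permutation `g` is an automorphism of `T_n` that sends a permutation to
one of the same sign. It therefore preserves the case distinction defining `φ_{t,e}`, and it
commutes with composition, so it transports the equations defining permissibility.
-/

open Equiv Equiv.Perm

theorem Equiv.exists_sign_eq_and_coe_eq_conj_iff {α β : Type*} [DecidableEq α] [Fintype α]
    [DecidableEq β] [Fintype β] (e : α ≃ β) (ε : ℤˣ) (s : α → α) :
    (∃ σ : Perm β, sign σ = ε ∧ ⇑σ = e.conj s) ↔ ∃ σ : Perm α, sign σ = ε ∧ ⇑σ = s := by
  refine (e.permCongr.exists_congr fun σ => ?_).symm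
  rw [sign_permCongr, ← e.conj.injective.eq_iff]
  rfl

section Conjugation

variable {n : ℕ} (g : Perm (Fin n))

theorem isOddPerm_conj_iff (s : Fin n → Fin n) : IsOddPerm (g.conj s) ↔ IsOddPerm s :=
  g.exists_sign_eq_and_coe_eq_conj_iff (-1) s

theorem isEvenPerm_conj_iff (s : Fin n → Fin n) : IsEvenPerm (g.conj s) ↔ IsEvenPerm s :=
  g.exists_sign_eq_and_coe_eq_conj_iff 1 s

theorem phi_conj (t e s : Fin n → Fin n) : phi t e (g.conj s) = phi t e s := by
  unfold phi
  rw [isOddPerm_conj_iff, isEvenPerm_conj_iff]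

theorem conj_phi (t e s : Fin n → Fin n) : g.conj (phi t e s) = phi (g.conj t) (g.conj e) s := by
  unfold phi
  split_ifs <;> simp only [conj_comp]

theorem Permissible.conj {t e : Fin n → Fin n} (h : Permissible t e) :
    Permissible (g.conj t) (g.conj e) := by
  obtain ⟨htt, hte, het, hee⟩ := h
  refine ⟨?_, ?_, ?_, ?_⟩ <;> simp only [← conj_comp, htt, hte, het, hee]

end Conjugation

/-- For a permissible pair `(t, e)` and a permutation `g`:
(i) `φ_{t,e} (g ∘ s ∘ g⁻¹) = φ_{t,e} s` for all `s`; and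
(ii) the pair `(g ∘ t ∘ g⁻¹, g ∘ e ∘ g⁻¹)` is permissible and
`g ∘ φ_{t,e} s ∘ g⁻¹ = φ_{g∘t∘g⁻¹, g∘e∘g⁻¹} s` for all `s`. -/
theorem phi_conjugation (n : ℕ) (t e : Fin n → Fin n) (h : Permissible t e)
    (g : Equiv.Perm (Fin n)) :
    (∀ s : Fin n → Fin n, phi t e (⇑g ∘ s ∘ ⇑g⁻¹) = phi t e s) ∧
      (Permissible (⇑g ∘ t ∘ ⇑g⁻¹) (⇑g ∘ e ∘ ⇑g⁻¹) ∧
        ∀ s : Fin n → Fin n,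
          ⇑g ∘ phi t e s ∘ ⇑g⁻¹ = phi (⇑g ∘ t ∘ ⇑g⁻¹) (⇑g ∘ e ∘ ⇑g⁻¹) s) :=
  ⟨phi_conj g t e, h.conj g, conj_phi g t e⟩
end

section
/- Let n be a natural number and let (t, e) and (u, f) be permissible pairs of elements of T_n. Then the composite map s ↦ φ_{u,f}(φ_{t,e}(s)) equals: φ_{u,f} if t is an odd permutation and e ≠ id; φ_{u∘u, f} if t is an even permutation and e ≠ id; φ_{f,f} if t is not bijective; and φ_{u∘u, u∘u} if e = id. -/
lemma not_odd_and_even {n : ℕ} {s : Fin n → Fin n} (h1 : IsOddPerm s) (h2 : IsEvenPerm s) :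
    False := by
  obtain ⟨σ, hσs, hσ⟩ := h1
  obtain ⟨τ, hτs, hτ⟩ := h2
  have : σ = τ := Equiv.coe_fn_injective (hσ.trans hτ.symm)
  subst this
  rw [hσs] at hτs
  exact absurd hτs (by decide)

lemma odd_bij {n : ℕ} {s : Fin n → Fin n} (h : IsOddPerm s) : Function.Bijective s := by
  obtain ⟨σ, _, hσ⟩ := h; exact hσ ▸ σ.bijective

lemma even_bij {n : ℕ} {s : Fin n → Fin n} (h : IsEvenPerm s) : Function.Bijective s := by
  obtain ⟨σ, _, hσ⟩ := h; exact hσ ▸ σ.bijective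

lemma bij_odd_or_even {n : ℕ} {s : Fin n → Fin n} (h : Function.Bijective s) :
    IsOddPerm s ∨ IsEvenPerm s := by
  rcases Int.units_eq_one_or (Equiv.Perm.sign (Equiv.ofBijective s h)) with hs | hs
  · exact Or.inr ⟨_, hs, rfl⟩
  · exact Or.inl ⟨_, hs, rfl⟩

lemma odd_sq {n : ℕ} {s : Fin n → Fin n} (h : IsOddPerm s) : IsEvenPerm (s ∘ s) := by
  obtain ⟨σ, hσs, hσ⟩ := h
  exact ⟨σ * σ, by rw [map_mul, hσs]; decide, by rw [Equiv.Perm.coe_mul, hσ]⟩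

lemma even_sq {n : ℕ} {s : Fin n → Fin n} (h : IsEvenPerm s) : IsEvenPerm (s ∘ s) := by
  obtain ⟨σ, hσs, hσ⟩ := h
  exact ⟨σ * σ, by rw [map_mul, hσs]; decide, by rw [Equiv.Perm.coe_mul, hσ]⟩

lemma idem_bij_eq_id {n : ℕ} {e : Fin n → Fin n} (h : e ∘ e = e)
    (hb : Function.Bijective e) : e = id := by
  funext x
  exact hb.1 (congrFun h x)

lemma isEven_id {n : ℕ} : IsEvenPerm (id : Fin n → Fin n) :=
  ⟨1, by simp, rfl⟩

lemma phi_odd {n : ℕ} {t e s : Fin n → Fin n} (h : IsOddPerm s) : phi t e s = t := by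
  simp [phi, h]

lemma phi_even {n : ℕ} {t e s : Fin n → Fin n} (h : IsEvenPerm s) : phi t e s = t ∘ t := by
  rw [phi, if_neg (fun h1 => not_odd_and_even h1 h), if_pos h]

lemma phi_nb {n : ℕ} {t e s : Fin n → Fin n} (h : ¬ Function.Bijective s) : phi t e s = e := by
  rw [phi, if_neg (fun h1 => h (odd_bij h1)), if_neg (fun h2 => h (even_bij h2))]

/-- For permissible pairs `(t, e)` and `(u, f)`, the composite
`s ↦ φ_{u,f} (φ_{t,e} s)` equals `φ_{u,f}` if `t` is an odd permutation and `e ≠ id`;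
`φ_{u∘u, f}` if `t` is an even permutation and `e ≠ id`; `φ_{f,f}` if `t` is not bijective;
and `φ_{u∘u, u∘u}` if `e = id`. -/
theorem phi_composition (n : ℕ) (t e u f : Fin n → Fin n)
    (hte : Permissible t e) (huf : Permissible u f) :
    ((IsOddPerm t ∧ e ≠ id) → (fun s => phi u f (phi t e s)) = phi u f) ∧
      ((IsEvenPerm t ∧ e ≠ id) → (fun s => phi u f (phi t e s)) = phi (u ∘ u) f) ∧
      (¬ Function.Bijective t → (fun s => phi u f (phi t e s)) = phi f f) ∧
      (e = id → (fun s => phi u f (phi t e s)) = phi (u ∘ u) (u ∘ u)) := by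
  obtain ⟨ht3, hte1, het, hee⟩ := hte
  obtain ⟨hu3, huf1, hfu, hff⟩ := huf
  have huu : (u ∘ u) ∘ (u ∘ u) = u ∘ u := by
    funext x; simpa [Function.comp] using congrFun hu3 (u x)
  refine ⟨?_, ?_, ?_, ?_⟩
  · rintro ⟨ht, he⟩
    have hef : ¬ Function.Bijective e := fun hb => he (idem_bij_eq_id hee hb)
    funext s
    by_cases h1 : IsOddPerm s
    · rw [phi_odd h1, phi_odd ht, phi_odd h1]
    · by_cases h2 : IsEvenPerm s
      · rw [phi_even h2, phi_even (odd_sq ht), phi_even h2]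
      · have hsb : ¬ Function.Bijective s := fun hb => (bij_odd_or_even hb).elim h1 h2
        rw [phi_nb hsb, phi_nb hef, phi_nb hsb]
  · rintro ⟨ht, he⟩
    have hef : ¬ Function.Bijective e := fun hb => he (idem_bij_eq_id hee hb)
    funext s
    by_cases h1 : IsOddPerm s
    · rw [phi_odd h1, phi_even ht, phi_odd h1]
    · by_cases h2 : IsEvenPerm s
      · rw [phi_even h2, phi_even (even_sq ht), phi_even h2, huu]
      · have hsb : ¬ Function.Bijective s := fun hb => (bij_odd_or_even hb).elim h1 h2
        rw [phi_nb hsb, phi_nb hef, phi_nb hsb]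
  · intro ht
    have htt : ¬ Function.Bijective (t ∘ t) := fun hb =>
      ht ⟨Function.Injective.of_comp hb.1, Function.Surjective.of_comp hb.2⟩
    have hef : ¬ Function.Bijective e := fun hb => by
      have : e = id := idem_bij_eq_id hee hb
      subst this
      have ht' : t = id := by simpa using hte1
      exact ht (ht' ▸ Function.bijective_id)
    have hto : ¬ IsOddPerm t := fun h => ht (odd_bij h)
    have hto2 : ¬ IsEvenPerm t := fun h => ht (even_bij h)
    funext s
    by_cases h1 : IsOddPerm s
    · rw [phi_odd h1, phi_nb ht, phi_odd h1]
    · by_cases h2 : IsEvenPerm s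
      · rw [phi_even h2, phi_nb htt, phi_even h2, hff]
      · have hsb : ¬ Function.Bijective s := fun hb => (bij_odd_or_even hb).elim h1 h2
        rw [phi_nb hsb, phi_nb hef, phi_nb hsb]
  · intro he
    subst he
    have htid : t = id := by simpa using het
    subst htid
    have hid : phi u f (id : Fin n → Fin n) = u ∘ u := phi_even isEven_id
    funext s
    by_cases h1 : IsOddPerm s
    · rw [phi_odd h1, hid, phi_odd h1]
    · by_cases h2 : IsEvenPerm s
      · rw [phi_even h2, phi_even h2, huu]
        simpa using hid
      · have hsb : ¬ Function.Bijective s := fun hb => (bij_odd_or_even hb).elim h1 h2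
        rw [phi_nb hsb, hid, phi_nb hsb]
end
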